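/- arXiv:1607.00576 — 3 statements merged into one kernel-verified Lean document; each statement's English description precedes it below -/
import Mathlib

section
/- The projective distance satisfies the triangle inequality: for any nonzero x, y, z in R^3, dist(x,z) ≤ dist(x,y) + dist(y,z), where dist(a,b) = ||a ∧ b||/(||a|| ||b||). -/
noncomputable section

/-- Cross product in ℝ³. -/
def cross3 (x y : Fin 3 → ℝ) : Fin 3 → ℝ :=
  ![x 1 * y 2 - x 2 * y 1, x 2 * y 0 - x 0 * y 2, x 0 * y 1 - x 1 * y 0]

/-- Scalar product in ℝ³. -/
def dot3 (x y : Fin 3 → ℝ) : ℝ := x 0 * y 0 + x 1 * y 1 + x 2 * y 2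

/-- Euclidean norm in ℝ³. -/
def nrm (x : Fin 3 → ℝ) : ℝ := Real.sqrt (dot3 x x)

/-- Projective distance between nonzero vectors of ℝ³. -/
def pdist (x y : Fin 3 → ℝ) : ℝ := nrm (cross3 x y) / (nrm x * nrm y)

/-- The canonical map ℤ³ → ℝ³. -/
def toR (x : Fin 3 → ℤ) : Fin 3 → ℝ := fun i => (x i : ℝ)

/-- Determinant of three vectors of ℝ³. -/
def det3 (a b c : Fin 3 → ℝ) : ℝ :=
  a 0 * (b 1 * c 2 - b 2 * c 1) - a 1 * (b 0 * c 2 - b 2 * c 0) + a 2 * (b 0 * c 1 - b 1 * c 0)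

/-- Determinant of three vectors of ℤ³. -/
def det3Z (a b c : Fin 3 → ℤ) : ℤ :=
  a 0 * (b 1 * c 2 - b 2 * c 1) - a 1 * (b 0 * c 2 - b 2 * c 0) + a 2 * (b 0 * c 1 - b 1 * c 0)

/-- Cross product of integer vectors. -/
def crossZ (x y : Fin 3 → ℤ) : Fin 3 → ℤ :=
  ![x 1 * y 2 - x 2 * y 1, x 2 * y 0 - x 0 * y 2, x 0 * y 1 - x 1 * y 0]

/-- A point of ℤ³ is primitive if its coordinates are coprime (in particular it is nonzero). -/
def IsPrimitive (x : Fin 3 → ℤ) : Prop := Int.gcd (Int.gcd (x 0) (x 1)) (x 2) = 1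

/-- A pair of points of ℤ³ is primitive if their cross product is a primitive point. -/
def PrimPair (x y : Fin 3 → ℤ) : Prop := IsPrimitive (crossZ x y)

/-- The golden ratio. -/
def γ : ℝ := (1 + Real.sqrt 5) / 2

/-!
Split `x ⨯₃ z` along `x ⨯₃ y`, `y ⨯₃ z` and `y`:
`‖y‖² (x ⨯₃ z) = (y ⬝ z) (x ⨯₃ y) + w` with `w = (x ⬝ y) (y ⨯₃ z) + (y ⬝ x ⨯₃ z) y`.
The two summands of `w` are orthogonal, and `(y ⬝ x ⨯₃ z) y = (y ⨯₃ z) ⨯₃ (x ⨯₃ y)` has norm at most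
`‖x ⨯₃ y‖ ‖y ⨯₃ z‖`, so Lagrange's identity `‖x‖²‖y‖² = (x ⬝ y)² + ‖x ⨯₃ y‖²` gives
`‖w‖ ≤ ‖x‖ ‖y‖ ‖y ⨯₃ z‖`. Taking norms yields `‖y‖ ‖x ⨯₃ z‖ ≤ ‖z‖ ‖x ⨯₃ y‖ + ‖x‖ ‖y ⨯₃ z‖`,
which is the triangle inequality multiplied by `‖x‖ ‖y‖ ‖z‖`.
-/

open Matrix

lemma cross3_eq_crossProduct (x y : Fin 3 → ℝ) : cross3 x y = x ⨯₃ y :=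
  (cross_apply x y).symm

lemma dot3_eq_dotProduct (x y : Fin 3 → ℝ) : dot3 x y = x ⬝ᵥ y := by
  simp only [dot3, dotProduct, Fin.sum_univ_three]

lemma nrm_eq_norm (x : Fin 3 → ℝ) : nrm x = ‖(WithLp.toLp 2 x : EuclideanSpace ℝ (Fin 3))‖ := by
  simp [nrm, dot3, EuclideanSpace.norm_eq, Fin.sum_univ_three, sq]

lemma nrm_nonneg (x : Fin 3 → ℝ) : 0 ≤ nrm x := Real.sqrt_nonneg _

lemma nrm_pos {x : Fin 3 → ℝ} (hx : x ≠ 0) : 0 < nrm x := by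
  simpa [nrm_eq_norm] using hx

lemma nrm_sq (x : Fin 3 → ℝ) : nrm x ^ 2 = x ⬝ᵥ x := by
  rw [nrm, dot3_eq_dotProduct, Real.sq_sqrt (by simpa using dotProduct_self_star_nonneg x)]

lemma nrm_add_le (x y : Fin 3 → ℝ) : nrm (x + y) ≤ nrm x + nrm y := by
  simpa only [nrm_eq_norm, WithLp.toLp_add] using norm_add_le _ _

lemma nrm_smul (c : ℝ) (x : Fin 3 → ℝ) : nrm (c • x) = |c| * nrm x := by
  simp only [nrm_eq_norm, WithLp.toLp_smul, norm_smul, Real.norm_eq_abs]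

lemma nrm_add_sq_of_dotProduct_eq_zero {x y : Fin 3 → ℝ} (h : x ⬝ᵥ y = 0) :
    nrm (x + y) ^ 2 = nrm x ^ 2 + nrm y ^ 2 := by
  simp only [nrm_sq, add_dotProduct, dotProduct_add, h, dotProduct_comm y x]
  ring

lemma nrm_cross_sq (x y : Fin 3 → ℝ) :
    nrm (x ⨯₃ y) ^ 2 = nrm x ^ 2 * nrm y ^ 2 - (x ⬝ᵥ y) ^ 2 := by
  rw [nrm_sq, nrm_sq, nrm_sq, cross_dot_cross, dotProduct_comm y x]
  ring

lemma nrm_cross_le (x y : Fin 3 → ℝ) : nrm (x ⨯₃ y) ≤ nrm x * nrm y :=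
  (abs_le_of_sq_le_sq' (by nlinarith [nrm_cross_sq x y])
    (mul_nonneg (nrm_nonneg x) (nrm_nonneg y))).2

lemma abs_dotProduct_le (x y : Fin 3 → ℝ) : |x ⬝ᵥ y| ≤ nrm x * nrm y :=
  abs_le_of_sq_le_sq (by nlinarith [nrm_cross_sq x y, sq_nonneg (nrm (x ⨯₃ y))])
    (mul_nonneg (nrm_nonneg x) (nrm_nonneg y))

lemma dotProduct_self_smul_cross_eq (x y z : Fin 3 → ℝ) :
    (y ⬝ᵥ y) • (x ⨯₃ z) =
      (y ⬝ᵥ z) • (x ⨯₃ y) + ((x ⬝ᵥ y) • (y ⨯₃ z) + (y ⬝ᵥ x ⨯₃ z) • y) := by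
  ext i
  simp only [Pi.add_apply, Pi.smul_apply, smul_eq_mul, cross_apply, dotProduct, Fin.sum_univ_three]
  fin_cases i <;> simp <;> ring

lemma cross_cross_cross_eq_smul (x y z : Fin 3 → ℝ) :
    (y ⨯₃ z) ⨯₃ (x ⨯₃ y) = (y ⬝ᵥ x ⨯₃ z) • y := by
  ext i
  simp only [Pi.smul_apply, smul_eq_mul, cross_apply, dotProduct, Fin.sum_univ_three]
  fin_cases i <;> simp <;> ring

lemma abs_dotProduct_cross_mul_nrm_le (x y z : Fin 3 → ℝ) :
    |y ⬝ᵥ x ⨯₃ z| * nrm y ≤ nrm (x ⨯₃ y) * nrm (y ⨯₃ z) := by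
  simpa only [cross_cross_cross_eq_smul, nrm_smul, mul_comm (nrm (x ⨯₃ y))]
    using nrm_cross_le (y ⨯₃ z) (x ⨯₃ y)

lemma nrm_smul_cross_add_smul_le (x y z : Fin 3 → ℝ) :
    nrm ((x ⬝ᵥ y) • (y ⨯₃ z) + (y ⬝ᵥ x ⨯₃ z) • y) ≤ nrm x * nrm y * nrm (y ⨯₃ z) := by
  have horth : ((x ⬝ᵥ y) • (y ⨯₃ z)) ⬝ᵥ ((y ⬝ᵥ x ⨯₃ z) • y) = 0 := by
    simp [dotProduct_comm (y ⨯₃ z) y, dot_self_cross]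
  have hpyth := nrm_add_sq_of_dotProduct_eq_zero horth
  rw [nrm_smul, nrm_smul] at hpyth
  have htriple := abs_dotProduct_cross_mul_nrm_le x y z
  refine (pow_le_pow_iff_left₀ (nrm_nonneg _)
    (mul_nonneg (mul_nonneg (nrm_nonneg x) (nrm_nonneg y)) (nrm_nonneg _)) two_ne_zero).1 ?_
  calc nrm ((x ⬝ᵥ y) • (y ⨯₃ z) + (y ⬝ᵥ x ⨯₃ z) • y) ^ 2
      = (|x ⬝ᵥ y| * nrm (y ⨯₃ z)) ^ 2 + (|y ⬝ᵥ x ⨯₃ z| * nrm y) ^ 2 := hpyth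
    _ ≤ (|x ⬝ᵥ y| * nrm (y ⨯₃ z)) ^ 2 + (nrm (x ⨯₃ y) * nrm (y ⨯₃ z)) ^ 2 := by
      gcongr
      exact mul_nonneg (abs_nonneg _) (nrm_nonneg y)
    _ = (nrm x * nrm y * nrm (y ⨯₃ z)) ^ 2 := by
      rw [mul_pow (nrm (x ⨯₃ y)), nrm_cross_sq, mul_pow, sq_abs]
      ring

lemma nrm_mul_nrm_cross_le (x y z : Fin 3 → ℝ) :
    nrm y * nrm (x ⨯₃ z) ≤ nrm z * nrm (x ⨯₃ y) + nrm x * nrm (y ⨯₃ z) := by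
  rcases (nrm_nonneg y).eq_or_lt with hy | hy
  · rw [← hy, zero_mul]
    exact add_nonneg (mul_nonneg (nrm_nonneg _) (nrm_nonneg _))
      (mul_nonneg (nrm_nonneg _) (nrm_nonneg _))
  refine le_of_mul_le_mul_left ?_ hy
  calc nrm y * (nrm y * nrm (x ⨯₃ z)) = nrm ((y ⬝ᵥ y) • (x ⨯₃ z)) := by
        rw [nrm_smul, ← nrm_sq, abs_sq]
        ring
    _ = nrm ((y ⬝ᵥ z) • (x ⨯₃ y) + ((x ⬝ᵥ y) • (y ⨯₃ z) + (y ⬝ᵥ x ⨯₃ z) • y)) := by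
        rw [dotProduct_self_smul_cross_eq]
    _ ≤ |y ⬝ᵥ z| * nrm (x ⨯₃ y) + nrm x * nrm y * nrm (y ⨯₃ z) := by
        grw [nrm_add_le, nrm_smul, nrm_smul_cross_add_smul_le]
    _ ≤ nrm y * nrm z * nrm (x ⨯₃ y) + nrm x * nrm y * nrm (y ⨯₃ z) := by
        grw [abs_dotProduct_le y z]
        exact nrm_nonneg _
    _ = nrm y * (nrm z * nrm (x ⨯₃ y) + nrm x * nrm (y ⨯₃ z)) := by ring

/-- Triangle inequality for the projective distance. -/
theorem stmt1 (x y z : Fin 3 → ℝ) (hx : x ≠ 0) (hy : y ≠ 0) (hz : z ≠ 0) :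
    pdist x z ≤ pdist x y + pdist y z := by
  simp only [pdist, cross3_eq_crossProduct]
  have ha := nrm_pos hx
  have hb := nrm_pos hy
  have hc := nrm_pos hz
  rw [div_add_div _ _ (by positivity) (by positivity), div_le_div_iff₀ (by positivity) (by positivity)]
  linear_combination (nrm x * nrm y * nrm z) * nrm_mul_nrm_cross_le x y z
end
end

section
/- Let α be a real number such that |qα - p| ≥ 1/(C₁|q|) for all integers p, q with q ≠ 0, for some constant C₁ > 1. Let p_n, q_n be integers with gcd(p_n, q_n) = 1, q_n ≥ 1, and |q_n α - p_n| < 1/q_{n+1} where q_{n+1} > q_n. Then for any integers p, q with 1 ≤ |q| < q_n, one has |q p_n - p q_n| ≥ q_n/(2 C₁ |q|). -/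
noncomputable section

/-! Since `q pn - p qn = qn (q α - p) - q (qn α - pn)`, where the first term has absolute value at
least `qn / (C₁ |q|)` and the second less than `|q| / qn1 < 1`, we get `|q pn - p qn| > qn / (C₁ |q|) - 1`.
Also `|q pn - p qn| ≥ 1`, because `pn / qn` is in lowest terms and `0 < |q| < qn`. The average of the
two lower bounds is the claim. -/

theorem Int.mul_sub_mul_ne_zero_of_isCoprime {a b p q : ℤ} (hab : IsCoprime a b) (hq0 : q ≠ 0)
    (hqb : |q| < b) : q * a - p * b ≠ 0 := by
  intro h
  have hbq : b ∣ q := hab.symm.dvd_of_dvd_mul_right ⟨p, by linarith⟩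
  have := Int.le_of_dvd (abs_pos.mpr hq0) ((dvd_abs b q).mpr hbq)
  omega

theorem sub_le_abs_mul_sub_mul (x a b c d : ℝ) :
    |b| * |c * x - d| - |c| * |b * x - a| ≤ |c * a - d * b| := by
  have key : c * a - d * b = b * (c * x - d) - c * (b * x - a) := by ring
  rw [key, ← abs_mul, ← abs_mul]
  exact abs_sub_abs_le_abs_sub _ _

theorem stmt4_general (α C₁ : ℝ)
    (hbad : ∀ p q : ℤ, q ≠ 0 → 1 / (C₁ * |(q : ℝ)|) ≤ |(q : ℝ) * α - (p : ℝ)|)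
    (pn qn qn1 : ℤ) (hcop : IsCoprime pn qn) (hlt : qn < qn1)
    (happ : |(qn : ℝ) * α - (pn : ℝ)| < 1 / (qn1 : ℝ))
    (p q : ℤ) (hq1 : 1 ≤ |q|) (hqlt : |q| < qn) :
    (qn : ℝ) / (2 * C₁ * |(q : ℝ)|) ≤ |((q * pn - p * qn : ℤ) : ℝ)| := by
  have hq0 : q ≠ 0 := abs_pos.mp (by omega)
  have hqn : (0 : ℝ) ≤ qn := by exact_mod_cast (show (0 : ℤ) ≤ qn by omega)
  have hqn1 : (0 : ℝ) < qn1 := by exact_mod_cast (show (0 : ℤ) < qn1 by omega)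
  have hqq1 : |(q : ℝ)| ≤ qn1 := by exact_mod_cast (hqlt.trans hlt).le
  have hone : 1 ≤ |((q * pn - p * qn : ℤ) : ℝ)| := by
    exact_mod_cast Int.one_le_abs (Int.mul_sub_mul_ne_zero_of_isCoprime hcop hq0 hqlt)
  have hsmall : |(q : ℝ)| * |(qn : ℝ) * α - pn| < 1 :=
    calc |(q : ℝ)| * |(qn : ℝ) * α - pn| ≤ qn1 * |(qn : ℝ) * α - pn| := by gcongr
      _ < qn1 * (1 / qn1) := by gcongr
      _ = 1 := by field_simp
  have hbig : qn * (1 / (C₁ * |(q : ℝ)|)) ≤ |(qn : ℝ)| * |(q : ℝ) * α - p| := by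
    rw [abs_of_nonneg hqn]
    exact mul_le_mul_of_nonneg_left (hbad p q hq0) hqn
  have hcross := sub_le_abs_mul_sub_mul α pn qn q p
  have hsplit : (qn : ℝ) / (2 * C₁ * |(q : ℝ)|) = qn * (1 / (C₁ * |(q : ℝ)|)) / 2 := by
    rw [mul_assoc, div_mul_eq_div_div_swap]; ring
  push_cast at hone ⊢
  linarith

/-- Lemma 2 of the paper. -/
theorem stmt4 (α C₁ : ℝ) (hC : 1 < C₁)
    (hbad : ∀ p q : ℤ, q ≠ 0 → 1 / (C₁ * |(q : ℝ)|) ≤ |(q : ℝ) * α - (p : ℝ)|)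
    (pn qn qn1 : ℤ) (hcop : IsCoprime pn qn) (hqn : 1 ≤ qn) (hlt : qn < qn1)
    (happ : |(qn : ℝ) * α - (pn : ℝ)| < 1 / (qn1 : ℝ))
    (p q : ℤ) (hq1 : 1 ≤ |q|) (hqlt : |q| < qn) :
    (qn : ℝ) / (2 * C₁ * |(q : ℝ)|) ≤ |((q * pn - p * qn : ℤ) : ℝ)| :=
  stmt4_general α C₁ hbad pn qn qn1 hcop hlt happ p q hq1 hqlt
end
end

section
/- For points x, y in Z^3, the following are equivalent: (i) x ∧ y is a primitive point of Z^3 (nonzero with coprime coordinates); (ii) (x, y) is a basis of the group Z^3 ∩ span_R(x,y); (iii) there exists z in Z^3 such that (x, y, z) is a basis of Z^3. -/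
noncomputable section

/-!
The determinant `det3Z x y z` is the dot product `(x ∧ y) ⬝ᵥ z`, so (i) ⇒ (iii) is Bézout's
identity for the coordinates of `x ∧ y`. If `det3Z x y z = ±1`, Cramer's rule expresses the
coefficients of `w = a x + b y` as `±det3Z w y z` and `±det3Z x w z`, which are integers:
(iii) ⇒ (ii). If a prime `p` divides `x ∧ y`, then `x` and `y` are dependent modulo `p`, so
`p ∣ a x + b y` for integers `a`, `b` not both divisible by `p`; the integer point
`(a x + b y) / p` of `span_ℝ(x, y)` is not an integral combination of `x` and `y`, so (ii) fails.
-/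

open Matrix

lemma toR_injective : Function.Injective toR :=
  Int.cast_injective.comp_left

lemma toR_zsmul_add_zsmul (m n : ℤ) (x y : Fin 3 → ℤ) :
    toR (m • x + n • y) = (m : ℝ) • toR x + (n : ℝ) • toR y := by
  funext i
  simp [toR]

lemma det3_toR (a b c : Fin 3 → ℤ) : det3 (toR a) (toR b) (toR c) = det3Z a b c := by
  simp [det3, det3Z, toR]

lemma det3_smul_add_smul_left (a b : ℝ) (u v w : Fin 3 → ℝ) :
    det3 (a • u + b • v) v w = a * det3 u v w := by
  simp only [det3, Pi.add_apply, Pi.smul_apply, smul_eq_mul]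
  ring

lemma det3_smul_add_smul_middle (a b : ℝ) (u v w : Fin 3 → ℝ) :
    det3 u (a • u + b • v) w = b * det3 u v w := by
  simp only [det3, Pi.add_apply, Pi.smul_apply, smul_eq_mul]
  ring

lemma linearIndependent_pair_of_det3_ne_zero {u v w : Fin 3 → ℝ} (h : det3 u v w ≠ 0) :
    LinearIndependent ℝ ![u, v] := by
  have hzero : det3 0 v w = 0 := by simp [det3]
  have hzero' : det3 u 0 w = 0 := by simp [det3]
  refine LinearIndependent.pair_iff.2 fun s t hst => ⟨?_, ?_⟩
  · have hs : s * det3 u v w = 0 := by rw [← det3_smul_add_smul_left s t, hst, hzero]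
    exact (mul_eq_zero.1 hs).resolve_right h
  · have ht : t * det3 u v w = 0 := by rw [← det3_smul_add_smul_middle s t, hst, hzero']
    exact (mul_eq_zero.1 ht).resolve_right h

lemma exists_zsmul_add_zsmul_of_isUnit_det3Z {x y z w : Fin 3 → ℤ} (hd : IsUnit (det3Z x y z))
    {a b : ℝ} (hw : toR w = a • toR x + b • toR y) : ∃ m n : ℤ, w = m • x + n • y := by
  have ha : a * det3Z x y z = det3Z w y z := by
    rw [← det3_toR, ← det3_toR, hw, det3_smul_add_smul_left]
  have hb : b * det3Z x y z = det3Z x w z := by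
    rw [← det3_toR, ← det3_toR, hw, det3_smul_add_smul_middle]
  have hinv : (det3Z x y z : ℝ) * det3Z x y z = 1 := by exact_mod_cast Int.isUnit_mul_self hd
  refine ⟨det3Z w y z * det3Z x y z, det3Z x w z * det3Z x y z, toR_injective ?_⟩
  rw [toR_zsmul_add_zsmul, hw]
  push_cast
  rw [← ha, ← hb, mul_assoc, mul_assoc, hinv, mul_one, mul_one]

lemma det3Z_eq_crossZ_dotProduct (x y z : Fin 3 → ℤ) : det3Z x y z = crossZ x y ⬝ᵥ z := by
  simp only [det3Z, dotProduct, crossZ, Fin.sum_univ_three, cons_val_zero, cons_val_one,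
    cons_val]
  ring

lemma IsPrimitive.exists_dotProduct_eq_one {v : Fin 3 → ℤ} (hv : IsPrimitive v) :
    ∃ z, v ⬝ᵥ z = 1 := by
  obtain ⟨c, d, hcd⟩ := Int.isCoprime_iff_gcd_eq_one.2 hv
  obtain ⟨a, b, hab⟩ := Int.gcd_dvd_iff.1 (dvd_refl (Int.gcd (v 0) (v 1)))
  refine ⟨![a * c, b * c, d], ?_⟩
  simp only [dotProduct, Fin.sum_univ_three, cons_val_zero, cons_val_one, cons_val]
  linear_combination hcd - c * hab

lemma exists_prime_dvd_of_not_isPrimitive {v : Fin 3 → ℤ} (hv : ¬ IsPrimitive v) :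
    ∃ p : ℕ, p.Prime ∧ ∀ i, (p : ℤ) ∣ v i := by
  obtain ⟨p, hp, hpg⟩ := Nat.exists_prime_and_dvd hv
  replace hpg : (p : ℤ) ∣ Int.gcd (Int.gcd (v 0) (v 1)) (v 2) := Int.natCast_dvd_natCast.2 hpg
  refine ⟨p, hp, fun i => ?_⟩
  fin_cases i
  · exact hpg.trans ((Int.gcd_dvd_left _ _).trans (Int.gcd_dvd_left _ _))
  · exact hpg.trans ((Int.gcd_dvd_left _ _).trans (Int.gcd_dvd_right _ _))
  · exact hpg.trans (Int.gcd_dvd_right _ _)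

lemma exists_nontrivial_relation_mod_of_dvd_crossZ {p : ℕ} [Fact p.Prime] {x y : Fin 3 → ℤ}
    (h : ∀ i, (p : ℤ) ∣ crossZ x y i) :
    ∃ a b : ℤ, ¬ ((p : ℤ) ∣ a ∧ (p : ℤ) ∣ b) ∧ ∀ i, (p : ℤ) ∣ a * x i + b * y i := by
  let f : ℤ →+* ZMod p := Int.castRingHom (ZMod p)
  have hcross : (f ∘ x) ⨯₃ (f ∘ y) = 0 := by
    ext i
    have := (ZMod.intCast_zmod_eq_zero_iff_dvd _ p).2 (h i)
    fin_cases i <;> simpa [cross_apply, crossZ, f] using this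
  have hdep : ¬ LinearIndependent (ZMod p) ![f ∘ x, f ∘ y] :=
    fun hli => crossProduct_ne_zero_iff_linearIndependent.2 hli hcross
  rw [LinearIndependent.pair_iff] at hdep
  push Not at hdep
  obtain ⟨s, t, hst, hne⟩ := hdep
  obtain ⟨a, rfl⟩ := ZMod.intCast_surjective s
  obtain ⟨b, rfl⟩ := ZMod.intCast_surjective t
  refine ⟨a, b, ?_, fun i => ?_⟩
  · simp only [← ZMod.intCast_zmod_eq_zero_iff_dvd]
    tauto
  · rw [← ZMod.intCast_zmod_eq_zero_iff_dvd]
    simpa [f] using congrFun hst i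

lemma dvd_and_dvd_of_dvd_mul_add_mul {x y : Fin 3 → ℤ}
    (hli : LinearIndependent ℝ ![toR x, toR y])
    (hsat : ∀ z : Fin 3 → ℤ, (∃ a b : ℝ, toR z = a • toR x + b • toR y) →
      ∃ m n : ℤ, z = m • x + n • y)
    {p a b : ℤ} (hp : p ≠ 0) (h : ∀ i, p ∣ a * x i + b * y i) : p ∣ a ∧ p ∣ b := by
  choose q hq using h
  have hpR : (p : ℝ) ≠ 0 := Int.cast_ne_zero.2 hp
  have hq' : toR q = (a / p : ℝ) • toR x + (b / p : ℝ) • toR y := by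
    funext i
    simp only [toR, Pi.add_apply, Pi.smul_apply, smul_eq_mul]
    field_simp
    exact_mod_cast ((hq i).trans (mul_comm _ _)).symm
  obtain ⟨m, n, rfl⟩ := hsat q ⟨_, _, hq'⟩
  rw [toR_zsmul_add_zsmul] at hq'
  have hsub : (a / p - m : ℝ) • toR x + (b / p - n : ℝ) • toR y = 0 := by
    rw [sub_smul, sub_smul, ← add_sub_add_comm, hq', sub_self]
  obtain ⟨ham, hbn⟩ := LinearIndependent.pair_iff.1 hli _ _ hsub
  refine ⟨⟨m, ?_⟩, ⟨n, ?_⟩⟩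
  · rw [sub_eq_zero, div_eq_iff hpR] at ham
    exact_mod_cast ham.trans (mul_comm _ _)
  · rw [sub_eq_zero, div_eq_iff hpR] at hbn
    exact_mod_cast hbn.trans (mul_comm _ _)

/-- Equivalent characterizations of primitive pairs in ℤ³. -/
theorem stmt6 (x y : Fin 3 → ℤ) :
    List.TFAE [
      IsPrimitive (crossZ x y),
      LinearIndependent ℝ ![toR x, toR y] ∧
        ∀ z : Fin 3 → ℤ, (∃ a b : ℝ, toR z = a • toR x + b • toR y) →
          ∃ m n : ℤ, z = m • x + n • y,
      ∃ z : Fin 3 → ℤ, det3Z x y z = 1 ∨ det3Z x y z = -1] := by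
  tfae_have 1 → 3 := fun h => by
    obtain ⟨z, hz⟩ := h.exists_dotProduct_eq_one
    exact ⟨z, Or.inl (by rw [det3Z_eq_crossZ_dotProduct, hz])⟩
  tfae_have 3 → 2 := by
    rintro ⟨z, hz⟩
    have hd : IsUnit (det3Z x y z) := Int.isUnit_iff.2 hz
    refine ⟨linearIndependent_pair_of_det3_ne_zero (w := toR z) ?_,
      fun w ⟨a, b, hw⟩ => exists_zsmul_add_zsmul_of_isUnit_det3Z hd hw⟩
    rw [det3_toR]
    exact_mod_cast hd.ne_zero
  tfae_have 2 → 1 := by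
    rintro ⟨hli, hsat⟩
    by_contra hv
    obtain ⟨p, hp, hpv⟩ := exists_prime_dvd_of_not_isPrimitive hv
    have := Fact.mk hp
    obtain ⟨a, b, hab, hdvd⟩ := exists_nontrivial_relation_mod_of_dvd_crossZ hpv
    exact hab (dvd_and_dvd_of_dvd_mul_add_mul hli hsat (by exact_mod_cast hp.ne_zero) hdvd)
  tfae_finish
end
end
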